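/- arXiv:2109.11954 — 7 statements merged into one kernel-verified Lean document; each statement's English description precedes it below -/
import Mathlib

section
/- Let C, C', D be categories such that C and C' admit all small colimits, and let F : C × C' ⥤ D be a functor that preserves small colimits separately in each variable. Then F preserves sifted colimits: for every sifted category J and every functor p : J ⥤ C × C' admitting a colimit, F preserves the colimit of p. -/
open CategoryTheory CategoryTheory.Limits

universe v u u' u''

/-!
Colimits in `C × C'` are computed componentwise, so the colimit of `p` is the pair
`(colim p₁, colim p₂)` of the colimits of its components. Since `F` preserves colimits in each
variable separately, `F (colim p₁, colim p₂)` is the colimit over `J × J` of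
`(j, k) ↦ F (p₁ j, p₂ k)`; as `J` is sifted, the diagonal `J ⥤ J × J` is final, so it is also
the colimit over `J` of `j ↦ F (p₁ j, p₂ j) = F (p j)`.
-/

namespace CategoryTheory.Limits

variable {J J₁ J₂ C C' D : Type*} [Category* J] [Category* J₁] [Category* J₂]
  [Category* C] [Category* C'] [Category* D]

section

variable {p : J ⥤ C × C'}

def Cocone.prodMk (c₁ : Cocone (p ⋙ Prod.fst C C')) (c₂ : Cocone (p ⋙ Prod.snd C C')) :
    Cocone p where
  pt := (c₁.pt, c₂.pt)
  ι.app j := (c₁.ι.app j, c₂.ι.app j)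
  ι.naturality j j' f := Prod.ext (by simpa using c₁.w f) (by simpa using c₂.w f)

def IsColimit.prodMk {c₁ : Cocone (p ⋙ Prod.fst C C')} {c₂ : Cocone (p ⋙ Prod.snd C C')}
    (hc₁ : IsColimit c₁) (hc₂ : IsColimit c₂) : IsColimit (c₁.prodMk c₂) where
  desc s := (hc₁.desc ((Prod.fst C C').mapCocone s), hc₂.desc ((Prod.snd C C').mapCocone s))
  fac s j := Prod.ext (hc₁.fac _ j) (hc₂.fac _ j)
  uniq s m hm := Prod.ext
    (hc₁.hom_ext fun j => by rw [hc₁.fac]; exact congrArg (·.1) (hm j))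
    (hc₂.hom_ext fun j => by rw [hc₂.fac]; exact congrArg (·.2) (hm j))

end

lemma curry_mapCocone₂_ι_app (F : C × C' ⥤ D) {K₁ : J₁ ⥤ C} {K₂ : J₂ ⥤ C'}
    (c₁ : Cocone K₁) (c₂ : Cocone K₂) (j : J₁ × J₂) :
    ((Functor.curry.obj F).mapCocone₂ c₁ c₂).ι.app j =
      F.map ((c₁.ι.app j.1, c₂.ι.app j.2) : (K₁.obj j.1, K₂.obj j.2) ⟶ (c₁.pt, c₂.pt)) := by
  simp [← F.map_comp]
  rfl

noncomputable def IsColimit.mapCoconeProdMk [IsSifted J] (F : C × C' ⥤ D) {p : J ⥤ C × C'}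
    [PreservesColimit₂ (p ⋙ Prod.fst C C') (p ⋙ Prod.snd C C') (Functor.curry.obj F)]
    {c₁ : Cocone (p ⋙ Prod.fst C C')} {c₂ : Cocone (p ⋙ Prod.snd C C')}
    (hc₁ : IsColimit c₁) (hc₂ : IsColimit c₂) : IsColimit (F.mapCocone (c₁.prodMk c₂)) := by
  refine (IsColimit.equivOfNatIsoOfIso ?_ _ _ ?_).1
    ((Functor.Final.isColimitWhiskerEquiv (Functor.diag J) _).2
      (isColimitOfPreserves₂ (Functor.curry.obj F) hc₁ hc₂))
  · exact NatIso.ofComponents (fun _ ↦ Iso.refl _) (fun _ ↦ by simp)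
  · exact Cocone.ext (Iso.refl _) fun j ↦
      (Category.comp_id _).trans <| (Category.id_comp _).trans <|
        curry_mapCocone₂_ι_app F c₁ c₂ (j, j)

end CategoryTheory.Limits

/-- A functor of two variables which preserves small colimits separately in each variable
preserves sifted colimits. -/
theorem preservesSiftedColimits_of_preservesColimits_in_each_variable
    {C : Type u} [Category.{v} C] {C' : Type u'} [Category.{v} C']
    {D : Type u''} [Category.{v} D]
    [HasColimits C] [HasColimits C']
    (F : C × C' ⥤ D)
    (h₁ : ∀ c' : C', PreservesColimits (Prod.sectL C c' ⋙ F))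
    (h₂ : ∀ c : C, PreservesColimits (Prod.sectR c C' ⋙ F)) :
    ∀ (J : Type v) [SmallCategory J] [IsSifted J] (p : J ⥤ C × C') [HasColimit p],
      PreservesColimit p F := by
  intro J _ _ p _
  have (c' : C') :
      PreservesColimit (p ⋙ CategoryTheory.Prod.fst C C') ((Functor.curry.obj F).flip.obj c') :=
    (h₁ c').preservesColimitsOfShape.preservesColimit
  have (c : C) :
      PreservesColimit (p ⋙ CategoryTheory.Prod.snd C C') ((Functor.curry.obj F).obj c) :=
    (h₂ c).preservesColimitsOfShape.preservesColimit
  exact preservesColimit_of_preserves_colimit_cocone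
    ((colimit.isColimit _).prodMk (colimit.isColimit _))
    (IsColimit.mapCoconeProdMk F (colimit.isColimit _) (colimit.isColimit _))
end

section
/- Let (L, R) be an orthogonal factorization system on a category C. Then the full subcategory Ar^L(C) of the arrow category spanned by morphisms in L, equipped with the source functor ev₀ : Ar^L(C) ⥤ C, is a fibered category (Grothendieck fibration); moreover, a morphism (α, β) : (f : x₀ → x₁) → (g : y₀ → y₁) in Ar^L(C) (i.e. a commutative square with f, g ∈ L) is ev₀-cartesian if and only if the target component β : x₁ → y₁ lies in R. -/
open CategoryTheory

universe v u v' u'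

/-- An orthogonal factorization system `(L, R)` on a category `C`. -/
structure IsOFS {C : Type u} [Category.{v} C] (L R : MorphismProperty C) : Prop where
  L_iso : ∀ {X Y : C} (f : X ⟶ Y), IsIso f → L f
  R_iso : ∀ {X Y : C} (f : X ⟶ Y), IsIso f → R f
  L_comp : ∀ {X Y Z : C} (f : X ⟶ Y) (g : Y ⟶ Z), L f → L g → L (f ≫ g)
  R_comp : ∀ {X Y Z : C} (f : X ⟶ Y) (g : Y ⟶ Z), R f → R g → R (f ≫ g)
  factor : ∀ {X Y : C} (f : X ⟶ Y),
    ∃ (Z : C) (l : X ⟶ Z) (r : Z ⟶ Y), L l ∧ R r ∧ l ≫ r = f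
  lift : ∀ {A B X Y : C} (l : A ⟶ B) (r : X ⟶ Y), L l → R r →
    ∀ (u : A ⟶ X) (v : B ⟶ Y), l ≫ v = u ≫ r →
      ∃! d : B ⟶ X, l ≫ d = u ∧ d ≫ r = v

/-- A morphism `φ : x ⟶ y` is `P`-cartesian if every `ψ : z ⟶ y` with a factorization of
`P.map ψ` through `P.map φ` lifts uniquely. -/
def IsCartesianMor {E : Type u'} [Category.{v'} E] {C : Type u} [Category.{v} C]
    (P : E ⥤ C) {x y : E} (φ : x ⟶ y) : Prop :=
  ∀ (z : E) (ψ : z ⟶ y) (h : P.obj z ⟶ P.obj x), h ≫ P.map φ = P.map ψ →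
    ∃! χ : z ⟶ x, P.map χ = h ∧ χ ≫ φ = ψ

/-- A functor `P : E ⥤ C` is a Grothendieck fibration if every morphism of `C` into the image
of an object admits a cartesian lift. -/
def IsGrothendieckFibration {E : Type u'} [Category.{v'} E] {C : Type u} [Category.{v} C]
    (P : E ⥤ C) : Prop :=
  ∀ (y : E) (c : C) (g : c ⟶ P.obj y),
    ∃ (x : E) (e : P.obj x = c) (φ : x ⟶ y),
      P.map φ = eqToHom e ≫ g ∧ IsCartesianMor P φ

variable {C : Type u} [Category.{v} C]

/-- The full subcategory of the arrow category on the morphisms in `L`. -/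
abbrev ArrowL (L : MorphismProperty C) := ObjectProperty.FullSubcategory (fun f : Arrow C => L f.hom)

/-- The source functor `ev₀ : Ar^L(C) ⥤ C`. -/
abbrev evSource (L : MorphismProperty C) : ArrowL L ⥤ C :=
  ObjectProperty.ι _ ⋙ Arrow.leftFunc

/-!
A square `(α, β) : f ⟶ g` in `Ar^L(C)` with `β ∈ R` is `ev₀`-cartesian: a square into `g` over a
given source map is completed by the unique diagonal filler of the resulting `L`-against-`R`
square. Hence, for `y : y₀ ⟶ y₁` in `L` and `u : c ⟶ y₀`, factoring `u ≫ y` as `l ≫ r` gives the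
cartesian lift `(u, r) : l ⟶ y`. Conversely, if `(α, β)` is cartesian and `β = l ≫ r`, then
`(α, β)` factors as `(𝟙, l)` followed by the cartesian `(α, r)`; a map over an identity between
two cartesian lifts of the same morphism is invertible, so `l` is an isomorphism and `β ∈ R`.
-/

section Cartesian

variable {E : Type u'} [Category.{v'} E] {P : E ⥤ C}

theorem IsCartesianMor.eq_id_of_comp_eq {x y : E} {φ : x ⟶ y} (hφ : IsCartesianMor P φ)
    {e : x ⟶ x} (he : P.map e = 𝟙 _) (heφ : e ≫ φ = φ) : e = 𝟙 x :=
  (hφ x φ (𝟙 _) (Category.id_comp _)).unique ⟨he, heφ⟩ ⟨P.map_id x, Category.id_comp φ⟩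

theorem IsCartesianMor.isIso_of_comp {x z y : E} {k : x ⟶ z} {φ : z ⟶ y}
    (hkφ : IsCartesianMor P (k ≫ φ)) (hφ : IsCartesianMor P φ) [IsIso (P.map k)] : IsIso k := by
  obtain ⟨χ, ⟨hχP, hχ⟩, -⟩ := hkφ z φ (inv (P.map k)) (by simp)
  refine ⟨χ, hkφ.eq_id_of_comp_eq ?_ ?_, hφ.eq_id_of_comp_eq ?_ ?_⟩ <;> simp [hχP, hχ]

end Cartesian

variable {L R : MorphismProperty C}

theorem ArrowL.hom_ext {f g : ArrowL L} {m m' : f ⟶ g} (hl : m.hom.left = m'.hom.left)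
    (hr : m.hom.right = m'.hom.right) : m = m' :=
  InducedCategory.hom_ext (Arrow.hom_ext _ _ hl hr)

namespace IsOFS

theorem isCartesianMor_evSource (h : IsOFS L R) {f g : ArrowL L} (m : f ⟶ g)
    (hR : R m.hom.right) : IsCartesianMor (evSource L) m := by
  intro z ψ (u : z.obj.left ⟶ f.obj.left) (hu : u ≫ m.hom.left = ψ.hom.left)
  have sq : z.obj.hom ≫ ψ.hom.right = (u ≫ f.obj.hom) ≫ m.hom.right := by
    rw [← Arrow.w ψ.hom, ← hu]
    simp only [Category.assoc, Arrow.w m.hom]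
  obtain ⟨d, ⟨hd₁, hd₂⟩, hd⟩ := h.lift _ _ z.property hR _ _ sq
  refine ⟨ObjectProperty.homMk (Arrow.homMk u d hd₁.symm), ⟨rfl, ArrowL.hom_ext hu hd₂⟩, ?_⟩
  rintro χ ⟨rfl, hχ⟩
  exact ArrowL.hom_ext rfl (hd _ ⟨(Arrow.w χ.hom).symm, congrArg (·.hom.right) hχ⟩)

theorem right_of_isCartesianMor_evSource (h : IsOFS L R) {f g : ArrowL L} (m : f ⟶ g)
    (hm : IsCartesianMor (evSource L) m) : R m.hom.right := by
  obtain ⟨_, l, r, hl, hr, hlr⟩ := h.factor m.hom.right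
  let z : ArrowL L := ⟨Arrow.mk (f.obj.hom ≫ l), h.L_comp _ _ f.property hl⟩
  let k : f ⟶ z := ObjectProperty.homMk (Arrow.homMk (𝟙 _) l)
  let m' : z ⟶ g := ObjectProperty.homMk (Arrow.homMk m.hom.left r (by simp [z, hlr]))
  have hkm : m = k ≫ m' := ArrowL.hom_ext (by simp [k, m']) hlr.symm
  have : IsIso ((evSource L).map k) := inferInstanceAs (IsIso (𝟙 _))
  have : IsIso k := (hkm ▸ hm).isIso_of_comp (h.isCartesianMor_evSource m' hr)
  have : IsIso l := inferInstanceAs (IsIso ((ObjectProperty.ι _ ⋙ Arrow.rightFunc).map k))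
  rw [← hlr]
  exact h.R_comp _ _ (h.R_iso l this) hr

theorem isGrothendieckFibration_evSource (h : IsOFS L R) :
    IsGrothendieckFibration (evSource L) := by
  intro y c u
  obtain ⟨_, l, r, hl, hr, hlr⟩ := h.factor (u ≫ y.obj.hom)
  exact ⟨⟨Arrow.mk l, hl⟩, rfl, ObjectProperty.homMk (Arrow.homMk u r hlr.symm),
    (Category.id_comp u).symm, h.isCartesianMor_evSource _ hr⟩

end IsOFS

/-- Given an orthogonal factorization system `(L, R)` on `C`, the source functor
`ev₀ : Ar^L(C) ⥤ C` is a Grothendieck fibration, and a morphism of `Ar^L(C)` is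
`ev₀`-cartesian if and only if its target component lies in `R`. -/
theorem evSource_isFibration_and_cartesian_iff
    (L R : MorphismProperty C) (h : IsOFS L R) :
    IsGrothendieckFibration (evSource L) ∧
      ∀ (f g : ArrowL L) (m : f ⟶ g),
        IsCartesianMor (evSource L) m ↔ R ((m.hom : f.obj ⟶ g.obj).right) :=
  ⟨h.isGrothendieckFibration_evSource,
    fun _ _ m => ⟨h.right_of_isCartesianMor_evSource m, h.isCartesianMor_evSource m⟩⟩
end

section
/- Let F : B ⥤ Cat be a functor and suppose each fiber category F.obj b is equipped with an orthogonal factorization system (L_b, R_b) such that for every morphism α : b → b' in B, the functor F.map α carries L_b into L_{b'} and R_b into R_{b'}. Define classes (L, R) of morphisms in the Grothendieck construction ∫F as follows: a morphism (f : b → b', φ : (F.map f).obj x → x') lies in L iff φ ∈ L_{b'}, and lies in R iff f is an isomorphism and the induced fiber morphism lies in R_{b'} (up to isomorphism). Then (L, R) is an orthogonal factorization system on ∫F. -/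
/-! Every morphism `f` of `∫F` is the morphism `⟨f.base, 𝟙⟩` followed by the vertical morphism
on `f.fiber`, and the first factor is invertible when `f.base` is. So lifting `l` against a
morphism of `R` reduces to lifting it against a vertical morphism `ρ` over `c`. There the base of
the diagonal is forced to be the base `β` of the bottom edge, and what remains is the lifting
problem of `F β (l.fiber)` against `ρ` in `F c`, which has a unique solution because `F β`
preserves the left classes. -/

open CategoryTheory

universe v₁ u₁ v u

namespace IsOFS

variable {C : Type u} [Category.{v} C] {L R : MorphismProperty C}

theorem L_iso_comp (h : IsOFS L R) {X Y Z : C} (e : X ⟶ Y) [IsIso e] {f : Y ⟶ Z} (hf : L f) :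
    L (e ≫ f) :=
  h.L_comp e f (h.L_iso e inferInstance) hf

theorem R_iso_comp (h : IsOFS L R) {X Y Z : C} (e : X ⟶ Y) [IsIso e] {f : Y ⟶ Z} (hf : R f) :
    R (e ≫ f) :=
  h.R_comp e f (h.R_iso e inferInstance) hf

end IsOFS

namespace CategoryTheory

def UniqueLiftingProperty {C : Type u} [Category.{v} C] {A B X Y : C}
    (l : A ⟶ B) (r : X ⟶ Y) : Prop :=
  ∀ (u : A ⟶ X) (v : B ⟶ Y), l ≫ v = u ≫ r → ∃! d : B ⟶ X, l ≫ d = u ∧ d ≫ r = v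

theorem UniqueLiftingProperty.iso_comp {C : Type u} [Category.{v} C] {A B X X' Y : C}
    {l : A ⟶ B} {r : X ⟶ Y} (h : UniqueLiftingProperty l r) (e : X' ⟶ X) [IsIso e] :
    UniqueLiftingProperty l (e ≫ r) := by
  intro u v sq
  obtain ⟨d, ⟨hu, hv⟩, hd⟩ := h (u ≫ e) v (by rw [sq, Category.assoc])
  refine ⟨d ≫ inv e, ⟨by simp [reassoc_of% hu], by simpa using hv⟩, fun d' ⟨hu', hv'⟩ => ?_⟩
  rw [← hd (d' ≫ e) ⟨by rw [reassoc_of% hu'], by rw [Category.assoc, hv']⟩]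
  simp

namespace Grothendieck

variable {C : Type u} [Category.{v} C] {F : C ⥤ Cat.{v₁, u₁}}

-- This is `(ι F c).map φ` with literal endpoints, so that composites with it typecheck at
-- reducible transparency.
abbrev vertical {c : C} {x y : F.obj c} (φ : x ⟶ y) : (⟨c, x⟩ : Grothendieck F) ⟶ ⟨c, y⟩ :=
  ⟨𝟙 c, eqToHom (by simp) ≫ φ⟩

theorem comp_vertical {X : Grothendieck F} {c : C} {x y : F.obj c} (f : X ⟶ ⟨c, x⟩)
    (φ : x ⟶ y) : f ≫ vertical φ = ⟨f.base, f.fiber ≫ φ⟩ := by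
  have h := Functor.congr_hom congr($(F.map_id c).toFunctor) f.fiber
  rw [Cat.Hom.id_map] at h
  fapply Grothendieck.ext
  · simp
  · rw [comp_fiber, h, eqToHom_trans_assoc]
    simp

theorem hom_eq_isoMk_comp_vertical {X Y : Grothendieck F} (f : X ⟶ Y) [IsIso f.base] :
    f = (isoMk (Y := ⟨Y.base, (F.map f.base).toFunctor.obj X.fiber⟩) (asIso f.base)
      (Iso.refl _)).hom ≫ vertical f.fiber := by
  rw [comp_vertical]
  exact Grothendieck.ext _ _ rfl (by show eqToHom rfl ≫ f.fiber = 𝟙 _ ≫ f.fiber; simp)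

theorem exists_vertical_eq {c : C} {x y : F.obj c} (g : (⟨c, x⟩ : Grothendieck F) ⟶ ⟨c, y⟩)
    (hg : g.base = 𝟙 c) : ∃ ψ : x ⟶ y, vertical ψ = g := by
  obtain ⟨β, φ⟩ := g
  subst hg
  exact ⟨eqToHom (by simp) ≫ φ, Grothendieck.ext _ _ rfl (by simp)⟩

theorem isIso_of_isIso_vertical {c : C} {x y : F.obj c} (φ : x ⟶ y)
    [IsIso (vertical (F := F) φ)] : IsIso φ := by
  have hbase : (inv (vertical (F := F) φ)).base = 𝟙 c := by
    have h := congr(Hom.base $(IsIso.hom_inv_id (vertical (F := F) φ)))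
    exact (Category.id_comp _).symm.trans h
  obtain ⟨ψ, hψ⟩ := exists_vertical_eq _ hbase
  have h₁ := IsIso.hom_inv_id (vertical (F := F) φ)
  have h₂ := IsIso.inv_hom_id (vertical (F := F) φ)
  rw [← hψ, comp_vertical] at h₁ h₂
  exact ⟨ψ, by simpa [eqToHom_comp_iff] using Grothendieck.congr h₁,
    by simpa [eqToHom_comp_iff] using Grothendieck.congr h₂⟩

theorem isIso_fiber {X Y : Grothendieck F} (f : X ⟶ Y) [hf : IsIso f] : IsIso f.fiber := by
  have : IsIso f.base := (forget F).map_isIso f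
  have : IsIso (vertical (F := F) f.fiber) := by
    rwa [hom_eq_isoMk_comp_vertical f, isIso_comp_left_iff] at hf
  exact isIso_of_isIso_vertical f.fiber

theorem comp_mk_eq_mk_iff {A B X : Grothendieck F} (l : A ⟶ B) (β : B.base ⟶ X.base)
    (δ : (F.map β).toFunctor.obj B.fiber ⟶ X.fiber)
    (ψ : (F.map (l.base ≫ β)).toFunctor.obj A.fiber ⟶ X.fiber) :
    l ≫ (⟨β, δ⟩ : B ⟶ X) = ⟨l.base ≫ β, ψ⟩ ↔
      (F.map β).toFunctor.map l.fiber ≫ δ = eqToHom (by simp) ≫ ψ := by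
  constructor
  · intro h
    have := Grothendieck.congr h
    rwa [comp_fiber, eqToHom_comp_iff, eqToHom_trans_assoc] at this
  · intro h
    refine Grothendieck.ext _ _ rfl ?_
    rw [comp_fiber, h, eqToHom_trans_assoc, eqToHom_trans_assoc, eqToHom_refl, Category.id_comp]

theorem uniqueLiftingProperty_vertical {A B : Grothendieck F} {c : C} {x y : F.obj c}
    (l : A ⟶ B) (ρ : x ⟶ y)
    (h : ∀ β : B.base ⟶ c, UniqueLiftingProperty ((F.map β).toFunctor.map l.fiber) ρ) :
    UniqueLiftingProperty l (vertical ρ) := by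
  rintro ⟨β', ψ⟩ ⟨β, φ⟩ sq
  rw [comp_vertical] at sq
  obtain rfl : l.base ≫ β = β' := congr(Hom.base $sq)
  rw [comp_mk_eq_mk_iff, ← Category.assoc] at sq
  obtain ⟨δ, ⟨hδl, hδρ⟩, hδ⟩ := h β _ φ sq
  refine ⟨⟨β, δ⟩, ⟨(comp_mk_eq_mk_iff _ _ _ _).2 hδl, by rw [comp_vertical, hδρ]⟩, ?_⟩
  rintro ⟨β'', δ'⟩ ⟨hl, hρ⟩
  rw [comp_vertical, Hom.mk.injEq] at hρ
  obtain ⟨rfl, hρ⟩ := hρ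
  rw [hδ δ' ⟨(comp_mk_eq_mk_iff _ _ _ _).1 hl, eq_of_heq hρ⟩]

theorem uniqueLiftingProperty_of_isIso_base {A B X Y : Grothendieck F} (l : A ⟶ B) (r : X ⟶ Y)
    [IsIso r.base]
    (h : ∀ β : B.base ⟶ Y.base, UniqueLiftingProperty ((F.map β).toFunctor.map l.fiber) r.fiber) :
    UniqueLiftingProperty l r := by
  rw [hom_eq_isoMk_comp_vertical r]
  exact (uniqueLiftingProperty_vertical l r.fiber h).iso_comp _

end Grothendieck
end CategoryTheory

open Grothendieck in
/-- Given fiberwise orthogonal factorization systems compatible with the transition functors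
of `F : B ⥤ Cat`, the classes `L` (morphisms whose fiber component lies in the fiberwise
left class) and `R` (morphisms whose base component is an isomorphism and whose fiber
component lies in the fiberwise right class) form an orthogonal factorization system on the
Grothendieck construction `∫F`. -/
theorem grothendieck_ofs_of_fiberwise_ofs
    {B : Type u} [Category.{v} B] (F : B ⥤ Cat.{v₁, u₁})
    (Lb Rb : ∀ b : B, MorphismProperty (F.obj b))
    (hfib : ∀ b : B, IsOFS (Lb b) (Rb b))
    (hL : ∀ {b b' : B} (α : b ⟶ b') {x y : F.obj b} (φ : x ⟶ y),
      Lb b φ → Lb b' ((F.map α).toFunctor.map φ))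
    (hR : ∀ {b b' : B} (α : b ⟶ b') {x y : F.obj b} (φ : x ⟶ y),
      Rb b φ → Rb b' ((F.map α).toFunctor.map φ)) :
    IsOFS
      (fun {_ Y} (φ : _ ⟶ Y) => Lb Y.base φ.fiber :
        MorphismProperty (Grothendieck F))
      (fun {_ Y} (φ : _ ⟶ Y) => IsIso φ.base ∧ Rb Y.base φ.fiber :
        MorphismProperty (Grothendieck F)) := by
  refine ⟨fun f _ => ?_, fun f _ => ?_, fun f g hf hg => ?_, fun f g hf hg => ?_, fun f => ?_,
    fun l r hl hr => ?_⟩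
  · have := isIso_fiber f
    exact (hfib _).L_iso _ inferInstance
  · have := isIso_fiber f
    exact ⟨(forget F).map_isIso f, (hfib _).R_iso _ inferInstance⟩
  · rw [comp_fiber]
    exact (hfib _).L_iso_comp _ ((hfib _).L_comp _ _ (hL g.base f.fiber hf) hg)
  · refine ⟨IsIso.comp_isIso' hf.1 hg.1, ?_⟩
    rw [comp_fiber]
    exact (hfib _).R_iso_comp _ ((hfib _).R_comp _ _ (hR g.base f.fiber hf.2) hg.2)
  · obtain ⟨Z, l, r, hl, hr, hlr⟩ := (hfib _).factor f.fiber
    refine ⟨⟨_, Z⟩, ⟨f.base, l⟩, vertical r, hl, ⟨inferInstance, (hfib _).R_iso_comp _ hr⟩, ?_⟩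
    rw [comp_vertical, hlr]
    rfl
  · have := hr.1
    exact uniqueLiftingProperty_of_isIso_base l r fun β => (hfib _).lift _ _ (hL β _ hl) hr.2
end

section
/- Let f : C ⥤ D be a functor of small categories, φ : Cᵒᵖ ⥤ Type a presheaf, and let F : PShv(C) ⥤ PShv(D) be the left Kan extension of (yoneda ∘ f) along yoneda (equivalently, left Kan extension of presheaves along fᵒᵖ). Then the induced functor on categories of elements El(φ) ⥤ El(F φ) (sending (c, x ∈ φ(c)) to (f c, image of x under the canonical map φ → (F φ) ∘ fᵒᵖ)) is a final functor. -/
open CategoryTheory CategoryTheory.Limits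

universe w v₁ v₂ u₁ u₂ u

/-- For `q : A ⥤ B` and `ψ : B ⥤ Type`, the functor on categories of elements
`(q ⋙ ψ).Elements ⥤ ψ.Elements` sending `(a, x)` to `(q.obj a, x)`. -/
@[simps]
def compElements {A : Type u₁} [Category.{v₁} A] {B : Type u₂} [Category.{v₂} B]
    (q : A ⥤ B) (ψ : B ⥤ Type w) : (q ⋙ ψ).Elements ⥤ ψ.Elements where
  obj p := ⟨q.obj p.1, p.2⟩
  map {p p'} m := ⟨q.map m.val, m.property⟩
  map_id := by intro p; apply Subtype.ext; simp; rfl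
  map_comp := by intro p p' p'' m m'; apply Subtype.ext; simp; rfl

/-- The left Kan extension functor on presheaves along `fᵒᵖ`; it is the unique
colimit-preserving functor `PShv(C) ⥤ PShv(D)` extending `yoneda ∘ f`. -/
noncomputable abbrev presheafLan {C D : Type u} [SmallCategory C] [SmallCategory D]
    (f : C ⥤ D) : (Cᵒᵖ ⥤ Type u) ⥤ (Dᵒᵖ ⥤ Type u) :=
  f.op.lan

/-
Work with `Lan_L ψ` for any `L : A ⥤ B`. For `e = (b, y)` in `El(Lan_L ψ)`, the comma
category of `El ψ ⥤ El(Lan_L ψ)` over `e` is, via `(Lan_L ψ)(b) ≅ colim_{L ↓ b} ψ`, the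
category of elements `(j, x)` of `L ↓ b ⥤ Type` whose image in the colimit is the class of
`y`. The colimit of a type-valued functor is the set of connected components of its category
of elements, so this fiber is connected. Hence the functor is initial, and its opposite
(for `L = fᵒᵖ`) is final.
-/

namespace CategoryTheory

open Limits

theorem isConnected_of_surjective_obj {A : Type u₁} [Category.{v₁} A] {B : Type u₂}
    [Category.{v₂} B] [IsConnected A] (F : A ⥤ B) (hF : Function.Surjective F.obj) :
    IsConnected B := by
  have : Nonempty B := ⟨F.obj (Classical.arbitrary A)⟩
  refine zigzag_isConnected fun b₁ b₂ => ?_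
  obtain ⟨a₁, rfl⟩ := hF b₁
  obtain ⟨a₂, rfl⟩ := hF b₂
  exact zigzag_obj_of_zigzag F (isPreconnected_zigzag a₁ a₂)

theorem ObjectProperty.zigzag_of_zigzag_obj {A : Type u₁} [Category.{v₁} A]
    {P : ObjectProperty A}
    (hP : ∀ ⦃X Y : A⦄, (X ⟶ Y) → (P X ↔ P Y)) {X Y : P.FullSubcategory}
    (h : Zigzag X.obj Y.obj) : Zigzag X Y := by
  suffices ∀ Y' : A, Zigzag X.obj Y' → ∃ hY' : P Y', Zigzag X ⟨Y', hY'⟩ from (this _ h).2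
  intro Y' h'
  induction h' with
  | refl => exact ⟨X.property, .refl _⟩
  | tail _ hzag ih =>
    obtain ⟨hb, hXb⟩ := ih
    rcases hzag with ⟨⟨g⟩⟩ | ⟨⟨g⟩⟩
    · exact ⟨(hP g).1 hb, hXb.trans (.of_hom (ObjectProperty.homMk g))⟩
    · exact ⟨(hP g).2 hb, hXb.trans (.of_inv (ObjectProperty.homMk g))⟩

theorem Functor.Elements.zigzag_of_eqvGen_colimitTypeRel {J : Type u₁} [Category.{v₁} J]
    {K : J ⥤ Type w} {p q : K.Elements} (h : Relation.EqvGen K.ColimitTypeRel p q) :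
    Zigzag p q := by
  induction h with
  | rel p q hpq =>
    obtain ⟨g, hg⟩ := hpq
    exact .of_hom ⟨g, hg.symm⟩
  | refl => exact .refl _
  | symm _ _ _ ih => exact ih.symm
  | trans _ _ _ _ _ ih₁ ih₂ => exact ih₁.trans ih₂

namespace Limits.Types

variable {J : Type u₁} [Category.{v₁} J] (K : J ⥤ Type w) [HasColimit K]

def colimitFiber (t : colimit K) : ObjectProperty K.Elements :=
  fun p => colimit.ι K p.1 p.2 = t

instance isConnected_colimitFiber (t : colimit K) :
    IsConnected (colimitFiber K t).FullSubcategory := by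
  obtain ⟨j, x, hx⟩ := jointly_surjective' t
  have : Nonempty (colimitFiber K t).FullSubcategory := ⟨⟨⟨j, x⟩, hx⟩⟩
  refine zigzag_isConnected fun p q => ObjectProperty.zigzag_of_zigzag_obj ?_ ?_
  · intro p q g
    simp only [colimitFiber, ← g.property, colimit.w_apply]
  · exact Functor.Elements.zigzag_of_eqvGen_colimitTypeRel
      (colimit_eq (p.property.trans q.property.symm))

end Limits.Types

namespace Functor

variable {A : Type u₁} [Category.{v₁} A] {B : Type u₂} [Category.{v₂} B] (L : A ⥤ B)
  [∀ F : A ⥤ Type w, HasLeftKanExtension L F] (ψ : A ⥤ Type w)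
  [HasPointwiseLeftKanExtension L ψ]

theorem lan_map_lanUnit_app_eq_iff {X : B} (j : CostructuredArrow L X) (x : ψ.obj j.left)
    (y : (L.lan.obj ψ).obj X) :
    (L.lan.obj ψ).map j.hom ((L.lanUnit.app ψ).app j.left x) = y ↔
      colimit.ι (CostructuredArrow.proj L X ⋙ ψ) j x =
        (L.leftKanExtensionObjIsoColimit ψ X).hom y := by
  have h : (L.leftKanExtensionObjIsoColimit ψ X).inv
      (colimit.ι (CostructuredArrow.proj L X ⋙ ψ) j x) =
      (L.lan.obj ψ).map j.hom ((L.lanUnit.app ψ).app j.left x) :=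
    types_congr_hom (L.ι_leftKanExtensionObjIsoColimit_inv ψ X j) x
  rw [← h]
  exact (L.leftKanExtensionObjIsoColimit ψ X).toEquiv.symm_apply_eq

noncomputable def colimitFiberToCostructuredArrow (e : (L.lan.obj ψ).Elements) :
    (Types.colimitFiber (CostructuredArrow.proj L e.1 ⋙ ψ)
      ((L.leftKanExtensionObjIsoColimit ψ e.1).hom e.2)).FullSubcategory ⥤
    CostructuredArrow
      (NatTrans.mapElements (L.lanUnit.app ψ) ⋙ compElements L (L.lan.obj ψ)) e where
  obj p := CostructuredArrow.mk (Y := ψ.elementsMk p.obj.1.left p.obj.2)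
    ⟨p.obj.1.hom, (L.lan_map_lanUnit_app_eq_iff ψ _ _ _).2 p.property⟩
  map g := CostructuredArrow.homMk ⟨g.hom.1.left, g.hom.2⟩
    (Subtype.ext (CostructuredArrow.w g.hom.1))

theorem colimitFiberToCostructuredArrow_surjective_obj (e : (L.lan.obj ψ).Elements) :
    Function.Surjective (L.colimitFiberToCostructuredArrow ψ e).obj :=
  fun o => ⟨⟨⟨CostructuredArrow.mk o.hom.1, o.left.2⟩,
    (L.lan_map_lanUnit_app_eq_iff ψ _ _ _).1 o.hom.2⟩, rfl⟩

theorem initial_mapElements_lanUnit_comp_compElements :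
    (NatTrans.mapElements (L.lanUnit.app ψ) ⋙ compElements L (L.lan.obj ψ)).Initial where
  out e := isConnected_of_surjective_obj _ (L.colimitFiberToCostructuredArrow_surjective_obj ψ e)

end Functor

end CategoryTheory

/-- Let `f : C ⥤ D` be a functor of small categories, `φ` a presheaf on `C`, and
`F φ = Lan_{fᵒᵖ} φ` its left Kan extension to a presheaf on `D`.  Then the induced functor
on (opposite) categories of elements `El(φ) ⥤ El(F φ)`, sending `(c, x)` to
`(f c, (unit)_c x)`, is final. -/
theorem elements_functor_of_presheaf_lan_final
    {C D : Type u} [SmallCategory C] [SmallCategory D]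
    (f : C ⥤ D) (φ : Cᵒᵖ ⥤ Type u) :
    ((NatTrans.mapElements (f.op.lanUnit.app φ) ⋙
        compElements f.op ((presheafLan f).obj φ)).op).Final :=
  have := f.op.initial_mapElements_lanUnit_comp_compElements φ
  Functor.final_op_of_initial _
end

section
/- Let F : I ⥤ Cat be a functor, let C be a category, and let G : ∫F ⥤ C be a functor from the Grothendieck construction of F. Suppose that for each i ∈ I the restriction G_i : F.obj i ⥤ ∫F ⥤ C admits a colimit σ_i, and that these assemble (via the canonical comparison maps) into a functor σ : I ⥤ C. If σ admits a colimit x in C, then G admits a colimit, and colim G ≅ x; that is, colim_{∫F} G ≅ colim_{i ∈ I} colim_{F.obj i} G_i. -/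
/-!
Every morphism `⟨i, a⟩ ⟶ ⟨i', a'⟩` of `∫F` factors as a cartesian morphism over `u : i ⟶ i'`
followed by a morphism in the fibre over `i'`. Hence the fibrewise colimit cocones together with
the comparison maps form one natural transformation `G ⟶ forget F ⋙ σ`, and a cocone under `G` is
the same thing as a family of cocones under the fibres whose induced maps out of the `σ i` form a
cocone under `σ`. The colimit cocone of `σ` therefore yields a colimit cocone of `G`.
-/

open CategoryTheory CategoryTheory.Limits

universe v₁ u₁ v₂ u₂ v u

namespace CategoryTheory.Grothendieck

variable {I : Type u} [Category.{v} I] {F : I ⥤ Cat.{v₁, u₁}}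
  {C : Type u₂} [Category.{v₂} C] {G : Grothendieck F ⥤ C} {σ : I ⥤ C}

lemma ιNatTrans_app_comp_ι_map {p q : Grothendieck F} (f : p ⟶ q) :
    (ιNatTrans f.base).app p.fiber ≫ (ι F q.base).map f.fiber = f := by
  -- `simp` gets stuck on the objects `(ι F i).obj a`, so name the middle object explicitly.
  change ({ base := f.base, fiber := 𝟙 _ } :
    p ⟶ ⟨q.base, (F.map f.base).toFunctor.obj p.fiber⟩) ≫ _ = f
  apply Grothendieck.ext <;> simp [ι]
  rw [← Category.assoc]
  erw [eqToHom_trans]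
  simp

def natTransToForgetComp (κ : ∀ (i : I) (a : F.obj i), G.obj ⟨i, a⟩ ⟶ σ.obj i)
    (hfiber : ∀ (i : I) {a a' : F.obj i} (φ : a ⟶ a'), G.map ((ι F i).map φ) ≫ κ i a' = κ i a)
    (hbase : ∀ {i i' : I} (u : i ⟶ i') (a : F.obj i),
      κ i a ≫ σ.map u = G.map ((ιNatTrans u).app a) ≫ κ i' ((F.map u).toFunctor.obj a)) :
    G ⟶ forget F ⋙ σ where
  app p := κ p.base p.fiber
  naturality p q f := by
    conv_lhs => rw [← ιNatTrans_app_comp_ι_map f]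
    erw [G.map_comp, Category.assoc, hfiber, ← hbase]
    rfl

def fiberCocone (κ : G ⟶ forget F ⋙ σ) (i : I) : Cocone (ι F i ⋙ G) where
  pt := σ.obj i
  ι :=
    { app a := κ.app ((ι F i).obj a)
      naturality _ _ φ := (κ.naturality ((ι F i).map φ)).trans (congrArg (_ ≫ ·) (σ.map_id i)) }

variable {κ : G ⟶ forget F ⋙ σ} (hκ : ∀ i, IsColimit (fiberCocone κ i))

def coconeOfIsColimitFiberCocone (s : Cocone G) : Cocone σ where
  pt := s.pt
  ι :=
    { app i := (hκ i).desc (s.whisker (ι F i))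
      naturality i i' u := (hκ i).hom_ext fun a => by
        have hu := κ.naturality ((ιNatTrans u).app a)
        have hi := (hκ i).fac (s.whisker (ι F i)) a
        have hi' := (hκ i').fac (s.whisker (ι F i')) ((F.map u).toFunctor.obj a)
        erw [Category.comp_id, hi, ← reassoc_of% hu, hi']
        exact s.w _ }

def isColimitPrecomposeWhiskerForget {t : Cocone σ} (ht : IsColimit t) :
    IsColimit ((Cocone.precompose κ).obj (t.whisker (forget F))) where
  desc s := ht.desc (coconeOfIsColimitFiberCocone hκ s)
  fac s p := by
    have h₁ := ht.fac (coconeOfIsColimitFiberCocone hκ s) p.base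
    have h₂ := (hκ p.base).fac (s.whisker (ι F p.base)) p.fiber
    erw [Category.assoc, h₁]
    exact h₂
  uniq s m hm := ht.hom_ext fun i => (hκ i).hom_ext fun a => by
    have h₁ := ht.fac (coconeOfIsColimitFiberCocone hκ s) i
    have h₂ := (hκ i).fac (s.whisker (ι F i)) a
    erw [h₁, h₂, ← hm ((ι F i).obj a)]
    exact (Category.assoc _ _ _).symm

end CategoryTheory.Grothendieck

open CategoryTheory.Grothendieck in
/-- Colimit decomposition over a Grothendieck construction: if `G : ∫F ⥤ C` restricts on each
fiber `F.obj i` to a diagram with colimit `σ.obj i` (via the cocones `ι i`), these colimits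
assemble via the canonical comparison maps into the functor `σ : I ⥤ C`, and `σ` has a
colimit `t.pt`, then `G` has a colimit, and `colim G ≅ t.pt`. -/
theorem colimit_grothendieck_decomposition
    {I : Type u} [Category.{v} I] (F : I ⥤ Cat.{v₁, u₁})
    {C : Type u₂} [Category.{v₂} C]
    (G : Grothendieck F ⥤ C) (σ : I ⥤ C)
    (ι : ∀ (i : I) (a : F.obj i), G.obj ⟨i, a⟩ ⟶ σ.obj i)
    (hnat : ∀ (i : I) {a a' : F.obj i} (φ : a ⟶ a'),
      G.map ((Grothendieck.ι F i).map φ) ≫ ι i a' = ι i a)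
    (hcolim : ∀ (i : I) (Z : C) (g : ∀ a : F.obj i, G.obj ⟨i, a⟩ ⟶ Z),
      (∀ {a a' : F.obj i} (φ : a ⟶ a'),
        G.map ((Grothendieck.ι F i).map φ) ≫ g a' = g a) →
      ∃! m : σ.obj i ⟶ Z, ∀ a : F.obj i, ι i a ≫ m = g a)
    (hcompat : ∀ {i i' : I} (u : i ⟶ i') (a : F.obj i),
      ι i a ≫ σ.map u =
        G.map ({ base := u, fiber := 𝟙 _ } :
            (⟨i, a⟩ : Grothendieck F) ⟶ ⟨i', (F.map u).toFunctor.obj a⟩) ≫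
          ι i' ((F.map u).toFunctor.obj a))
    (t : Cocone σ) (ht : IsColimit t) :
    HasColimit G ∧
      ∀ (hG : HasColimit G), Nonempty (@colimit _ _ _ _ G hG ≅ t.pt) := by
  let κ := natTransToForgetComp ι hnat hcompat
  have hfib (i : I) : IsColimit (fiberCocone κ i) :=
    IsColimit.ofExistsUnique fun s => hcolim i s.pt s.ι.app fun φ => s.w φ
  have hc := isColimitPrecomposeWhiskerForget hfib ht
  exact ⟨⟨⟨⟨_, hc⟩⟩⟩, fun _ => ⟨(colimit.isColimit G).coconePointUniqueUpToIso hc⟩⟩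
end

section
/- Let F : B ⥤ Cat be a functor with Grothendieck construction π : ∫F ⥤ B, let p : C ⥤ B be any functor, and let Comma(p) denote the comma category whose objects are pairs (c ∈ C, f : p(c) → b). Then restriction along the canonical inclusion i : C ⥤ Comma(p) (sending c to (c, id_{p c})) induces an equivalence of categories between (a) functors Comma(p) ⥤ ∫F over B that send the canonical opcartesian morphisms (c, f : p c → b) → (c, g∘f : p c → b') to π-opcartesian morphisms, and (b) all functors C ⥤ ∫F over B. -/
open CategoryTheory

universe v₁ u₁ v' u' v u

namespace FreeOpfib

variable {B : Type u} [Category.{v} B]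

/-- A morphism `φ : x ⟶ y` is `q`-opcartesian if every `ψ : x ⟶ z` whose projection factors
through `q.map φ` lifts uniquely. -/
def IsOpcartesianMor {E : Type u'} [Category.{v'} E] (q : E ⥤ B) {x y : E}
    (φ : x ⟶ y) : Prop :=
  ∀ (z : E) (ψ : x ⟶ z) (g : q.obj y ⟶ q.obj z), q.map φ ≫ g = q.map ψ →
    ∃! χ : y ⟶ z, q.map χ = g ∧ φ ≫ χ = ψ

variable (F : B ⥤ Cat.{v₁, u₁})

/-- The category of functors `X ⥤ ∫F` lying strictly over `B` (relative to `q : X ⥤ B`),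
with morphisms the natural transformations projecting to the identity. -/
def OverCat {X : Type u'} [Category.{v'} X] (q : X ⥤ B) :=
  { H : X ⥤ Grothendieck F // H ⋙ Grothendieck.forget F = q }

instance {X : Type u'} [Category.{v'} X] (q : X ⥤ B) : Category (OverCat F q) where
  Hom H₁ H₂ := { η : H₁.1 ⟶ H₂.1 //
    Functor.whiskerRight η (Grothendieck.forget F) = eqToHom (H₁.2.trans H₂.2.symm) }
  id H := ⟨𝟙 H.1, by
    ext x
    simp [eqToHom_app]⟩
  comp {H₁ H₂ H₃} η θ := ⟨η.1 ≫ θ.1, by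
    ext x
    have h1 := NatTrans.congr_app η.2 x
    have h2 := NatTrans.congr_app θ.2 x
    simp only [Functor.whiskerRight_app, NatTrans.comp_app, Functor.map_comp] at *
    rw [h1, h2]
    simp [eqToHom_app]⟩
  id_comp := by intros; exact Subtype.ext (Category.id_comp _)
  comp_id := by intros; exact Subtype.ext (Category.comp_id _)
  assoc := by intros; exact Subtype.ext (Category.assoc _ _ _)

variable {C : Type u'} [Category.{v'} C] (p : C ⥤ B)

/-- The canonical inclusion `i : C ⥤ Comma(p)` of `C` into the free opfibration on `p`,
sending `c` to `(c, 𝟙 : p c ⟶ p c)`. -/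
@[simps]
def iFun : C ⥤ Comma p (𝟭 B) where
  obj c := { left := c, right := p.obj c, hom := 𝟙 _ }
  map f := { left := f, right := p.map f, w := by simp }

/-- The canonical opcartesian morphism `(c, f : p c ⟶ b) ⟶ (c, f ≫ g : p c ⟶ b')` of the
free opfibration. -/
@[simps]
def canOpcart (X : Comma p (𝟭 B)) {b' : B} (g : X.right ⟶ b') :
    X ⟶ ({ left := X.left, right := b', hom := X.hom ≫ g } : Comma p (𝟭 B)) where
  left := 𝟙 X.left
  right := g
  w := by simp

/-- A functor `H : Comma(p) ⥤ ∫F` sends the canonical opcartesian morphisms to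
`π`-opcartesian morphisms. -/
def SendsOpcart (H : Comma p (𝟭 B) ⥤ Grothendieck F) : Prop :=
  ∀ (X : Comma p (𝟭 B)) {b' : B} (g : X.right ⟶ b'),
    IsOpcartesianMor (Grothendieck.forget F) (H.map (canOpcart p X g))

/-- The category of functors `Comma(p) ⥤ ∫F` over `B` sending the canonical opcartesian
morphisms to `π`-opcartesian morphisms. -/
def Acat := ObjectProperty.FullSubcategory
  (fun H : OverCat F (Comma.snd p (𝟭 B)) => SendsOpcart F p H.1)

instance : Category (Acat F p) := ObjectProperty.FullSubcategory.category _

@[simp]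
lemma OverCat.id_val {X : Type u'} [Category.{v'} X] (q : X ⥤ B) (H : OverCat F q) :
    (𝟙 H : H ⟶ H).val = 𝟙 H.val := rfl

@[simp]
lemma OverCat.comp_val {X : Type u'} [Category.{v'} X] (q : X ⥤ B) {H₁ H₂ H₃ : OverCat F q}
    (η : H₁ ⟶ H₂) (θ : H₂ ⟶ H₃) : (η ≫ θ).val = η.val ≫ θ.val := rfl

/-- Restriction along `i : C ⥤ Comma(p)`. -/
def restrict : Acat F p ⥤ OverCat F p where
  obj H := ⟨iFun p ⋙ H.obj.val, by rw [Functor.assoc, H.obj.property]; rfl⟩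
  map {H₁ H₂} η := ⟨Functor.whiskerLeft (iFun p) η.hom.val, by
    ext c
    have h := NatTrans.congr_app η.hom.property ((iFun p).obj c)
    simp only [Functor.whiskerRight_app, Functor.whiskerLeft_app] at *
    rw [h]
    simp [eqToHom_app]⟩
  map_id := by
    intro X
    exact Subtype.ext (by show Functor.whiskerLeft (iFun p) (𝟙 X.obj.val) = _; simp; rfl)
  map_comp := by
    intro X Y Z f g
    exact Subtype.ext (by show Functor.whiskerLeft (iFun p) (f.hom.val ≫ g.hom.val) = _; simp; rfl)


section Aux

variable {F} {p}

/-- Postcomposing an opcartesian morphism with an isomorphism yields an opcartesian morphism. -/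
lemma isOpcartesianMor_comp_iso {E : Type u'} [Category.{v'} E] (q : E ⥤ B) {x y y' : E}
    (φ : x ⟶ y) (e : y ⟶ y') [IsIso e] (h : IsOpcartesianMor q φ) :
    IsOpcartesianMor q (φ ≫ e) := by
  intro z ψ g hg
  obtain ⟨χ, ⟨h1, h2⟩, hu⟩ := h z ψ (q.map e ≫ g) (by rw [← Category.assoc, ← q.map_comp, hg])
  refine ⟨inv e ≫ χ, ⟨by simp [h1], by simp [h2]⟩, fun χ' ⟨a, b⟩ => ?_⟩
  have := hu (e ≫ χ') ⟨by simp [a], by simpa using b⟩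
  rw [← this]; simp

/-- In the Grothendieck construction, a morphism whose fiber component is an isomorphism is
opcartesian. -/
lemma isOpcartesianMor_of_isIso_fiber {x y : Grothendieck F} (φ : x ⟶ y) [IsIso φ.fiber] :
    IsOpcartesianMor (Grothendieck.forget F) φ := by
  intro z ψ (g : y.base ⟶ z.base) hg
  simp only [Grothendieck.forget_map] at hg ⊢
  have hobj : (F.map g).toFunctor.obj ((F.map φ.base).toFunctor.obj x.fiber) = (F.map ψ.base).toFunctor.obj x.fiber := by
    rw [← Cat.Hom.comp_obj, ← F.map_comp]
    erw [hg]
  refine ⟨⟨g, (F.map g).toFunctor.map (inv φ.fiber) ≫ eqToHom hobj ≫ ψ.fiber⟩, ⟨rfl, ?_⟩, ?_⟩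
  · fapply Grothendieck.ext
    · exact hg
    simp [← Functor.map_comp_assoc]
    erw [eqToHom_trans_assoc, eqToHom_trans_assoc, eqToHom_refl, Category.id_comp]
  · rintro ⟨gb, gf⟩ ⟨hb, hc⟩
    simp only at hb
    subst hb
    fapply Grothendieck.ext
    · rfl
    have := Grothendieck.congr hc
    simp only [Grothendieck.comp_fiber] at this
    simp only [eqToHom_refl, Category.id_comp]
    rw [eqToHom_comp_iff] at this
    rw [← cancel_epi ((F.map gb).toFunctor.map φ.fiber)]
    simp only [← Functor.map_comp_assoc, IsIso.hom_inv_id, Functor.map_id, Category.id_comp]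
    rw [this]
    simp
    erw [eqToHom_trans_assoc]

end Aux


section Kappa

lemma comma_mk_eq (X : Comma p (𝟭 B)) :
    ({ left := X.left, right := X.right, hom := ((iFun p).obj X.left).hom ≫ X.hom } :
      Comma p (𝟭 B)) = X := by
  cases X
  congr 1
  exact Category.id_comp _

/-- The canonical opcartesian morphism from `i (X.left)` to `X`. -/
def κ (X : Comma p (𝟭 B)) : (iFun p).obj X.left ⟶ X :=
  canOpcart p ((iFun p).obj X.left) X.hom ≫ eqToHom (comma_mk_eq p X)

variable {F}

lemma kappa_natural {X Y : Comma p (𝟭 B)} (m : X ⟶ Y) :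
    κ p X ≫ m = (iFun p).map m.left ≫ κ p Y := by
  ext
  · simp [κ, canOpcart]
    erw [Comma.eqToHom_left, Comma.eqToHom_left]
    erw [eqToHom_refl, eqToHom_refl, Category.id_comp, Category.comp_id]
  · simp [κ, canOpcart]
    erw [Comma.eqToHom_right, Comma.eqToHom_right]
    simp [m.w]
    erw [Category.comp_id, m.w]
    rfl

variable {p}

lemma map_kappa_opcart (H : Acat F p) (X : Comma p (𝟭 B)) :
    IsOpcartesianMor (Grothendieck.forget F) (H.obj.1.map (κ p X)) := by
  rw [κ, Functor.map_comp]
  haveI : IsIso (H.obj.1.map (eqToHom (comma_mk_eq p X))) := Functor.map_isIso _ _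
  exact @isOpcartesianMor_comp_iso _ _ _ _ _ _ _ _ _ _ this (H.2 ((iFun p).obj X.left) X.hom)

lemma overcat_obj_base {X : Type u'} [Category.{v'} X] {q : X ⥤ B} (H : OverCat F q) (x : X) :
    (Grothendieck.forget F).obj (H.1.obj x) = q.obj x := Functor.congr_obj H.2 x

lemma overcat_map_base {X : Type u'} [Category.{v'} X] {q : X ⥤ B} (H : OverCat F q)
    {x y : X} (m : x ⟶ y) :
    (Grothendieck.forget F).map (H.1.map m) =
      eqToHom (overcat_obj_base H x) ≫ q.map m ≫ eqToHom (overcat_obj_base H y).symm := by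
  simpa using Functor.congr_hom H.2 m

lemma overcat_hom_base {X : Type u'} [Category.{v'} X] {q : X ⥤ B} {H₁ H₂ : OverCat F q}
    (η : H₁ ⟶ H₂) (x : X) :
    (Grothendieck.forget F).map (η.1.app x) =
      eqToHom ((overcat_obj_base H₁ x).trans (overcat_obj_base H₂ x).symm) := by
  have := NatTrans.congr_app η.2 x
  simpa [eqToHom_app] using this

end Kappa


section FullFaithful

variable {F p}

lemma kappa_iFun (c : C) : κ p ((iFun p).obj c) = 𝟙 ((iFun p).obj c) := by
  ext
  · simp [κ, canOpcart]
    erw [Comma.eqToHom_left, eqToHom_refl]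
    rfl
  · simp [κ, canOpcart]
    erw [Comma.eqToHom_right, eqToHom_refl, Category.id_comp]

lemma restrict_faithful : (restrict F p).Faithful where
  map_injective := by
    intro H₁ H₂ η θ h
    have h' : ∀ c : C, η.hom.val.app ((iFun p).obj c) = θ.hom.val.app ((iFun p).obj c) := fun c =>
      NatTrans.congr_app (congrArg Subtype.val h) c
    apply ObjectProperty.hom_ext
    apply Subtype.ext
    ext X
    have opc := map_kappa_opcart H₁ X
    have e1 := overcat_hom_base (H₁ := H₁.obj) (H₂ := H₂.obj) η.hom X
    have e2 := overcat_hom_base (H₁ := H₁.obj) (H₂ := H₂.obj) θ.hom X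
    refine (opc (H₂.obj.1.obj X)
        (η.hom.val.app ((iFun p).obj X.left) ≫ H₂.obj.1.map (κ p X))
        (eqToHom ((overcat_obj_base H₁.obj X).trans (overcat_obj_base H₂.obj X).symm)) ?_).unique
      ⟨e1, η.hom.val.naturality (κ p X)⟩
      ⟨e2, by rw [h' X.left]; exact θ.hom.val.naturality (κ p X)⟩
    rw [Functor.map_comp,
      overcat_hom_base (H₁ := H₁.obj) (H₂ := H₂.obj) η.hom ((iFun p).obj X.left),
      overcat_map_base H₁.obj, overcat_map_base H₂.obj]
    simp

lemma tau_id_comm {H₁ H₂ : Acat F p} (τ : (restrict F p).obj H₁ ⟶ (restrict F p).obj H₂)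
    (c : C) :
    H₁.obj.1.map (𝟙 ((iFun p).obj c)) ≫ τ.val.app c =
      τ.val.app c ≫ H₂.obj.1.map (𝟙 ((iFun p).obj c)) := by
  simp only [CategoryTheory.Functor.map_id]
  erw [Category.id_comp]
  exact (Category.comp_id _).symm

lemma restrict_full : (restrict F p).Full where
  map_surjective := by
    intro H₁ H₂ τ
    have hbτ : ∀ c : C, (Grothendieck.forget F).map (τ.val.app c) =
        eqToHom ((overcat_obj_base H₁.obj ((iFun p).obj c)).trans
          (overcat_obj_base H₂.obj ((iFun p).obj c)).symm) :=
      fun c => overcat_hom_base (H₁ := (restrict F p).obj H₁) (H₂ := (restrict F p).obj H₂) τ c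
    have key : ∀ X : Comma p (𝟭 B), ∃! χ : H₁.obj.1.obj X ⟶ H₂.obj.1.obj X,
        (Grothendieck.forget F).map χ =
          eqToHom ((overcat_obj_base H₁.obj X).trans (overcat_obj_base H₂.obj X).symm) ∧
        H₁.obj.1.map (κ p X) ≫ χ = τ.val.app X.left ≫ H₂.obj.1.map (κ p X) := by
      intro X
      refine map_kappa_opcart H₁ X _ _ _ ?_
      erw [Functor.map_comp (Grothendieck.forget F) (τ.val.app X.left), hbτ, overcat_map_base H₁.obj, overcat_map_base H₂.obj]
      simp
      erw [eqToHom_trans_assoc]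
      rfl
    have hb := fun X => (key X).choose_spec.1.1
    have hc := fun X => (key X).choose_spec.1.2
    have hu := fun X => (key X).choose_spec.2
    have hnat : ∀ {X Y : Comma p (𝟭 B)} (m : X ⟶ Y),
        H₁.obj.1.map m ≫ (key Y).choose = (key X).choose ≫ H₂.obj.1.map m := by
      intro X Y m
      have c1b : H₁.obj.1.map (κ p X) ≫ (key X).choose ≫ H₂.obj.1.map m =
          τ.val.app X.left ≫ H₂.obj.1.map (κ p X ≫ m) := by
        rw [← Category.assoc, hc X]
        simp
        exact Category.assoc _ _ _
      have c2b : H₁.obj.1.map (κ p X) ≫ H₁.obj.1.map m ≫ (key Y).choose =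
          τ.val.app X.left ≫ H₂.obj.1.map (κ p X ≫ m) := by
        erw [← Category.assoc, ← Functor.map_comp, kappa_natural, Functor.map_comp,
          Category.assoc, hc Y, ← Category.assoc]
        have hτn := τ.val.naturality m.left
        dsimp only [restrict] at hτn
        simp only [Functor.comp_map] at hτn
        erw [hτn]
        simp [← Functor.map_comp, ← kappa_natural]
        erw [Category.assoc, ← Functor.map_comp, ← kappa_natural]
        rfl
      have opc := map_kappa_opcart H₁ X
      have hbcand : (Grothendieck.forget F).map (H₁.obj.1.map m ≫ (key Y).choose) =
          (Grothendieck.forget F).map ((key X).choose ≫ H₂.obj.1.map m) := by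
        rw [Functor.map_comp, Functor.map_comp, hb X, hb Y,
          overcat_map_base H₁.obj, overcat_map_base H₂.obj]
        simp
      refine (opc (H₂.obj.1.obj Y)
          (τ.val.app X.left ≫ H₂.obj.1.map (κ p X ≫ m))
          ((Grothendieck.forget F).map ((key X).choose ≫ H₂.obj.1.map m)) ?_).unique
        ⟨hbcand, c2b⟩ ⟨rfl, c1b⟩
      erw [← c1b]
      simp
      rfl
    refine ⟨⟨⟨{ app := fun X => (key X).choose, naturality := fun _ _ m => hnat m }, ?_⟩⟩, ?_⟩
    · ext X
      simpa [eqToHom_app] using hb X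
    · apply Subtype.ext
      ext c
      exact ((hu ((iFun p).obj c)) (τ.val.app c)
        ⟨hbτ c, by
          rw [kappa_iFun]
          exact tau_id_comm τ c⟩).symm


end FullFaithful


section Extension

variable {F p}

lemma extBase (G : C ⥤ Grothendieck F) (hG : G ⋙ Grothendieck.forget F = p) (c : C) :
    (G.obj c).base = p.obj c := Functor.congr_obj hG c

lemma gmap_base (G : C ⥤ Grothendieck F) (hG : G ⋙ Grothendieck.forget F = p) {c c' : C}
    (u : c ⟶ c') :
    (G.map u).base = eqToHom (extBase G hG c) ≫ p.map u ≫ eqToHom (extBase G hG c').symm := by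
  have h := Functor.congr_hom hG u
  simp at h
  exact h

lemma extSq (G : C ⥤ Grothendieck F) (hG : G ⋙ Grothendieck.forget F = p)
    {X Y : Comma p (𝟭 B)} (m : X ⟶ Y) :
    (eqToHom (extBase G hG X.left) ≫ X.hom) ≫ m.right =
      (G.map m.left).base ≫ (eqToHom (extBase G hG Y.left) ≫ Y.hom) := by
  rw [gmap_base G hG]
  have hw := m.w
  simp only [Functor.id_map] at hw
  simp only [Category.assoc, eqToHom_trans_assoc, eqToHom_refl, Category.id_comp]
  rw [hw]

lemma extObjEq (G : C ⥤ Grothendieck F) (hG : G ⋙ Grothendieck.forget F = p)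
    {X Y : Comma p (𝟭 B)} (m : X ⟶ Y) :
    (F.map m.right).toFunctor.obj
        ((F.map (eqToHom (extBase G hG X.left) ≫ X.hom)).toFunctor.obj (G.obj X.left).fiber) =
      (F.map (eqToHom (extBase G hG Y.left) ≫ Y.hom)).toFunctor.obj
        ((F.map (G.map m.left).base).toFunctor.obj (G.obj X.left).fiber) := by
  rw [← Cat.Hom.comp_obj, ← Cat.Hom.comp_obj, ← F.map_comp, ← F.map_comp, extSq G hG m]

set_option maxHeartbeats 1000000 in
/-- The extension of `G : C ⥤ ∫F` to the free opfibration `Comma p (𝟭 B)`. -/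
def extFun (G : C ⥤ Grothendieck F) (hG : G ⋙ Grothendieck.forget F = p) :
    Comma p (𝟭 B) ⥤ Grothendieck F where
  obj X := ⟨X.right, (F.map (eqToHom (extBase G hG X.left) ≫ X.hom)).toFunctor.obj (G.obj X.left).fiber⟩
  map {X Y} m := ⟨m.right,
    eqToHom (extObjEq G hG m) ≫
      (F.map (eqToHom (extBase G hG Y.left) ≫ Y.hom)).toFunctor.map (G.map m.left).fiber⟩
  map_id X := by
    fapply Grothendieck.ext
    · rfl
    · simp only [Comma.id_left]
      rw [Grothendieck.congr (G.map_id X.left)]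
      simp [eqToHom_map]
      erw [← Functor.map_comp, eqToHom_trans, eqToHom_map (F.map (eqToHom (extBase G hG X.left) ≫ X.hom)).toFunctor,
        eqToHom_trans, eqToHom_trans]
  map_comp {X Y Z} m n := by
    fapply Grothendieck.ext
    · rfl
    · simp only [Comma.comp_left, Comma.comp_right, Grothendieck.comp_fiber]
      rw [Grothendieck.congr (G.map_comp m.left n.left)]
      simp only [Grothendieck.comp_fiber]
      have E1 : F.map (eqToHom (extBase G hG Y.left) ≫ Y.hom) ≫ F.map n.right =
          F.map (G.map n.left).base ≫ F.map (eqToHom (extBase G hG Z.left) ≫ Z.hom) := by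
        rw [← F.map_comp, ← F.map_comp, extSq G hG n]
      have E2 := Functor.congr_hom (congrArg Cat.Hom.toFunctor E1) (G.map m.left).fiber
      simp only [Cat.Hom.comp_toFunctor, Functor.comp_map] at E2
      simp only [Functor.map_comp, eqToHom_map, Category.assoc, eqToHom_trans,
        eqToHom_trans_assoc]
      rw [E2]
      simp [eqToHom_map, eqToHom_trans_assoc]
      erw [eqToHom_trans_assoc]


lemma extFun_forget (G : C ⥤ Grothendieck F) (hG : G ⋙ Grothendieck.forget F = p) :
    extFun G hG ⋙ Grothendieck.forget F = Comma.snd p (𝟭 B) := rfl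

lemma extFun_sendsOpcart (G : C ⥤ Grothendieck F) (hG : G ⋙ Grothendieck.forget F = p) :
    SendsOpcart F p (extFun G hG) := by
  intro X b' g
  haveI : IsIso ((extFun G hG).map (canOpcart p X g)).fiber := by
    dsimp only [extFun, canOpcart]
    rw [Grothendieck.congr (G.map_id X.left)]
    simp only [eqToHom_map, Grothendieck.id_fiber, eqToHom_trans]
    exact instIsIsoEqToHom _
  exact isOpcartesianMor_of_isIso_fiber _

lemma groth_eqToHom_base {x y : Grothendieck F} (h : x = y) :
    (eqToHom h).base = eqToHom (by rw [h]) := by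
  subst h; rfl

lemma groth_eqToHom_fiber {x y : Grothendieck F} (h : x = y) :
    (eqToHom h).fiber = eqToHom (by subst h; simp) := by
  subst h; rfl

lemma groth_mk_eq (x : Grothendieck F) {b : B} (h : x.base = b) :
    (⟨b, (F.map (eqToHom h ≫ 𝟙 b)).toFunctor.obj x.fiber⟩ : Grothendieck F) = x := by
  cases x
  subst h
  simp

lemma eqToHom_sandwich {D : Type*} [Category D] {a a' a1 a2 b b' : D} (M : a ⟶ b)
    (h1 : a' = a) (h2 : b = b') (k1 : a' = a1) (k2 : a1 = a2) (k3 : a2 = a) (h3 : b = b') :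
    eqToHom h1 ≫ M ≫ eqToHom h2 = eqToHom k1 ≫ eqToHom k2 ≫ eqToHom k3 ≫ M ≫ eqToHom h3 := by
  subst k1 k2 k3 h3
  simp

lemma ext_restrict (G : C ⥤ Grothendieck F) (hG : G ⋙ Grothendieck.forget F = p) :
    iFun p ⋙ extFun G hG = G := by
  fapply CategoryTheory.Functor.ext
  · intro c
    exact groth_mk_eq (G.obj c) (extBase G hG c)
  · intro c c' u
    fapply Grothendieck.ext
    · show p.map u = _
      simp [Grothendieck.eqToHom_eq, gmap_base G hG]
      erw [Grothendieck.base_eqToHom]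
      simp
      erw [eqToHom_refl, eqToHom_refl, Category.id_comp, Category.comp_id]
    · have hB : eqToHom (extBase G hG c') ≫ 𝟙 (p.obj c') =
          (eqToHom (groth_mk_eq (G.obj c') (extBase G hG c')).symm).base := by
        rw [groth_eqToHom_base]
        simp
      simp only [Functor.comp_map, Grothendieck.comp_fiber, groth_eqToHom_base,
        groth_eqToHom_fiber, eqToHom_map, Category.assoc, eqToHom_trans, eqToHom_trans_assoc]
      rw [show ((extFun G hG).map ((iFun p).map u)).fiber =
          eqToHom (extObjEq G hG ((iFun p).map u)) ≫
            (F.map (eqToHom (extBase G hG c') ≫ 𝟙 (p.obj c'))).toFunctor.map (G.map u).fiber from rfl]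
      erw [Functor.congr_hom (congrArg (fun f => (F.map f).toFunctor) hB) (G.map u).fiber]
      simp [eqToHom_map]
      erw [Grothendieck.fiber_eqToHom, eqToHom_map (F.map ((G.map u).base ≫
        (eqToHom (groth_mk_eq (G.obj c') (extBase G hG c')).symm).base)).toFunctor,
        eqToHom_trans_assoc, eqToHom_trans_assoc]
      exact eqToHom_sandwich _ _ _ _ _ _ _

lemma restrict_essSurj : (restrict F p).EssSurj where
  mem_essImage := by
    intro G
    exact ⟨⟨⟨extFun G.1 G.2, extFun_forget G.1 G.2⟩, extFun_sendsOpcart G.1 G.2⟩,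
      ⟨eqToIso (Subtype.ext (ext_restrict G.1 G.2))⟩⟩

end Extension

/-- Universal property of the free opfibration: restriction along `i : C ⥤ Comma(p)`
induces an equivalence between functors `Comma(p) ⥤ ∫F` over `B` sending the canonical
opcartesian morphisms to `π`-opcartesian morphisms, and all functors `C ⥤ ∫F` over `B`. -/
theorem restrict_isEquivalence : (restrict F p).IsEquivalence :=
  { faithful := restrict_faithful, full := restrict_full, essSurj := restrict_essSurj }

end FreeOpfib
end

section
/- Let F : B ⥤ Cat be a functor, π : ∫F ⥤ B its Grothendieck construction, and let b be an initial object of B. Suppose J is a category, D : J ⥤ F.obj b is a diagram admitting a colimit cocone c in the fiber F.obj b, and for every morphism f : b → b' in B the functor F.map f : F.obj b ⥤ F.obj b' preserves the colimit of D. Then the image of the cocone c under the fiber inclusion F.obj b ⥤ ∫F is a colimit cocone of the composite diagram J ⥤ F.obj b ⥤ ∫F; that is, the fiber inclusion F.obj b ⥤ ∫F preserves the colimit of D. -/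
open CategoryTheory CategoryTheory.Limits

universe v₁ u₁ w v u

theorem ι_map_fiber' {B : Type u} [Category.{v} B] (F : B ⥤ Cat.{v₁, u₁}) (b : B)
    {X Y : F.obj b} (x : X ⟶ Y) :
    ((Grothendieck.ι F b).map x).fiber =
      @CategoryStruct.comp (F.obj ((Grothendieck.ι F b).obj Y).base) _ _ _ _
        (eqToHom (by show (F.map (𝟙 b)).toFunctor.obj X = X; rw [F.map_id]; rfl)) x :=
    rfl

def pushCocone {B : Type u} [Category.{v} B] {F : B ⥤ Cat.{v₁, u₁}} {b : B}
    {J : Type w} [Category.{w} J] {D : J ⥤ F.obj b}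
    (s : Cocone (D ⋙ Grothendieck.ι F b)) (f : b ⟶ s.pt.base)
    (hf : ∀ j, (s.ι.app j).base = f) : Cocone (D ⋙ (F.map f).toFunctor) where
  pt := s.pt.fiber
  ι :=
  { app := fun j => eqToHom (by rw [hf j]; rfl) ≫ (s.ι.app j).fiber
    naturality := fun j j' g => by
      have h := Grothendieck.congr (s.w g)
      simp only [Grothendieck.comp_fiber, Functor.comp_map, Grothendieck.ι_map, ι_map_fiber'] at h
      simp only [Functor.comp_map, Category.comp_id]
      have hF : (F.map (s.ι.app j').base).toFunctor = (F.map f).toFunctor :=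
        congrArg (fun g => (F.map g).toFunctor) (hf j')
      erw [Functor.congr_hom hF] at h
      erw [Functor.map_comp (F.map f).toFunctor, eqToHom_map (F.map f).toFunctor] at h
      simp only [Functor.map_comp, eqToHom_map, eqToHom_trans_assoc, Category.assoc,
        eqToHom_trans, eqToHom_comp_iff] at h
      exact h.trans (Category.comp_id _).symm }

/-- If `b` is an initial object of `B`, `D : J ⥤ F.obj b` is a diagram with colimit cocone
`c` in the fiber `F.obj b`, and every transition functor `F.map f` preserves the colimit of
`D`, then the fiber inclusion `F.obj b ⥤ ∫F` preserves this colimit: the image of `c` under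
`Grothendieck.ι F b` is a colimit cocone in the Grothendieck construction. -/
theorem grothendieck_fiber_inclusion_preserves_colimit
    {B : Type u} [Category.{v} B] (F : B ⥤ Cat.{v₁, u₁})
    (b : B) (hb : IsInitial b)
    {J : Type w} [Category.{w} J] (D : J ⥤ F.obj b)
    (c : Cocone D) (hc : IsColimit c)
    (hpres : ∀ {b' : B} (f : b ⟶ b'), PreservesColimit D (F.map f).toFunctor) :
    Nonempty (IsColimit ((Grothendieck.ι F b).mapCocone c)) := by
  refine ⟨{
    desc := fun s =>
      ⟨hb.to s.pt.base, ((hpres (hb.to s.pt.base)).preserves hc).some.desc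
        (pushCocone s (hb.to s.pt.base) (fun j => hb.hom_ext _ _))⟩
    fac := fun s j => ?_
    uniq := fun s m hm => ?_ }⟩
  · apply Grothendieck.ext _ _ (hb.hom_ext _ _)
    have hfac := ((hpres (hb.to s.pt.base)).preserves hc).some.fac
      (pushCocone s (hb.to s.pt.base) (fun j => hb.hom_ext _ _)) j
    simp only [Functor.mapCocone_ι_app, Functor.mapCocone_pt] at hfac
    simp only [Grothendieck.comp_fiber, Grothendieck.ι_map, ι_map_fiber', Functor.mapCocone_ι_app,
      Functor.map_comp, eqToHom_map, Category.assoc]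
    erw [Functor.map_comp (F.map (hb.to s.pt.base)).toFunctor,
      eqToHom_map (F.map (hb.to s.pt.base)).toFunctor, Category.assoc]
    erw [hfac]
    simp [pushCocone]
    erw [eqToHom_trans_assoc, eqToHom_trans_assoc, eqToHom_trans_assoc, eqToHom_refl,
      Category.id_comp]
  · apply Grothendieck.ext _ _ (hb.hom_ext _ _)
    apply ((hpres (hb.to s.pt.base)).preserves hc).some.hom_ext
    intro j
    have h := Grothendieck.congr (hm j)
    simp only [Grothendieck.comp_fiber, Grothendieck.ι_map, ι_map_fiber', Functor.mapCocone_ι_app] at h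
    have hF : (F.map m.base).toFunctor = (F.map (hb.to s.pt.base)).toFunctor :=
      congrArg (fun g => (F.map g).toFunctor) (hb.hom_ext m.base (hb.to s.pt.base))
    erw [Functor.congr_hom hF] at h
    erw [Functor.map_comp (F.map (hb.to s.pt.base)).toFunctor,
      eqToHom_map (F.map (hb.to s.pt.base)).toFunctor] at h
    have hfac := ((hpres (hb.to s.pt.base)).preserves hc).some.fac
      (pushCocone s (hb.to s.pt.base) (fun j => hb.hom_ext _ _)) j
    simp only [Functor.mapCocone_ι_app, Functor.mapCocone_pt] at hfac ⊢
    erw [hfac]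
    simp only [Functor.map_comp, eqToHom_map, eqToHom_trans_assoc, Category.assoc,
      eqToHom_trans, eqToHom_comp_iff] at h ⊢
    simp [pushCocone]
    exact h
end
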